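/- For r > 0 and θ ∈ ℝ define X̂(r, θ) = ( -(sin θ/2)(r - 1/r) + (sin 3θ/6)(r³ - 1/r³), -(cos θ/2)(r - 1/r) - (cos 3θ/6)(r³ - 1/r³), -cos θ·sin θ·(r² + 1/r²) ) ∈ ℝ³ and X(r, θ) = ( (cos θ/2)(r - 1/r) - (cos 3θ/6)(r³ - 1/r³), -(sin θ/2)(r - 1/r) - (sin 3θ/6)(r³ - 1/r³), (cos 2θ/2)(r² + 1/r²) ) ∈ ℝ³. Let A be the rotation of ℝ³ about the x₃-axis by angle -π/4, i.e. the matrix with rows (cos(π/4), sin(π/4), 0), (-sin(π/4), cos(π/4), 0), (0,0,1). Then for all r > 0 and θ ∈ ℝ: A · X̂(r, θ + π/4) = -X(r, θ). -/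

import Mathlib

/-! Rotating by `-α` about the vertical axis shifts, by angle addition, the angles in the
horizontal components of `X̂(r, φ)` to `φ + α` and `3φ - α`. For `φ = θ + π/4` and `α = π/4`
these become `θ + π/2` and `3θ + π/2`, the vertical component involves `2φ = 2θ + π/2`, and
the quarter-turn identities `sin (x + π/2) = cos x`, `cos (x + π/2) = -sin x` turn the result
into `-X(r, θ)`. -/

/-- Parametrization of the blown-down limit of the rescaled complexity-2 surfaces. -/
noncomputable def Xhat (r θ : ℝ) : Fin 3 → ℝ :=
  ![-(Real.sin θ / 2) * (r - 1 / r) + (Real.sin (3 * θ) / 6) * (r ^ 3 - 1 / r ^ 3),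
    -(Real.cos θ / 2) * (r - 1 / r) - (Real.cos (3 * θ) / 6) * (r ^ 3 - 1 / r ^ 3),
    -(Real.cos θ * Real.sin θ) * (r ^ 2 + 1 / r ^ 2)]

/-- Parametrization of the classical Henneberg surface `H₁`. -/
noncomputable def Xhen (r θ : ℝ) : Fin 3 → ℝ :=
  ![(Real.cos θ / 2) * (r - 1 / r) - (Real.cos (3 * θ) / 6) * (r ^ 3 - 1 / r ^ 3),
    -(Real.sin θ / 2) * (r - 1 / r) - (Real.sin (3 * θ) / 6) * (r ^ 3 - 1 / r ^ 3),
    (Real.cos (2 * θ) / 2) * (r ^ 2 + 1 / r ^ 2)]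

/-- Rotation of `ℝ³` about the `x₃`-axis by angle `-π/4`. -/
noncomputable def Arot : Matrix (Fin 3) (Fin 3) ℝ :=
  !![Real.cos (Real.pi / 4), Real.sin (Real.pi / 4), 0;
     -Real.sin (Real.pi / 4), Real.cos (Real.pi / 4), 0;
     0, 0, 1]

open Real Matrix

noncomputable def rotZ (α : ℝ) : Matrix (Fin 3) (Fin 3) ℝ :=
  !![cos α, sin α, 0;
     -sin α, cos α, 0;
     0, 0, 1]

theorem Arot_eq_rotZ : Arot = rotZ (π / 4) := rfl

theorem rotZ_mulVec_vec3 (α a b c : ℝ) :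
    rotZ α *ᵥ ![a, b, c] = ![cos α * a + sin α * b, -sin α * a + cos α * b, c] := by
  ext i
  fin_cases i <;> simp [rotZ, mulVec]

theorem rotZ_mulVec_Xhat (α r φ : ℝ) :
    rotZ α *ᵥ Xhat r φ =
      ![-(sin (φ + α) / 2) * (r - 1 / r) + (sin (3 * φ - α) / 6) * (r ^ 3 - 1 / r ^ 3),
        -(cos (φ + α) / 2) * (r - 1 / r) - (cos (3 * φ - α) / 6) * (r ^ 3 - 1 / r ^ 3),
        -(sin (2 * φ) / 2) * (r ^ 2 + 1 / r ^ 2)] := by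
  rw [Xhat, rotZ_mulVec_vec3]
  apply vec3_eq
  · rw [sin_add, sin_sub]; ring
  · rw [cos_add, cos_sub]; ring
  · rw [sin_two_mul]; ring

/-- `A · X̂(r, θ + π/4) = -X(r, θ)` for all `r > 0` and `θ ∈ ℝ`: the blown-down
limit of the family `H(θ₂)` is congruent to the Henneberg surface `H₁`. -/
theorem limit_congruent_to_henneberg :
    ∀ (r θ : ℝ), 0 < r →
      Arot.mulVec (Xhat r (θ + Real.pi / 4)) = -(Xhen r θ) := by
  intro r θ _
  have h₁ : θ + π / 4 + π / 4 = θ + π / 2 := by ring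
  have h₂ : 3 * (θ + π / 4) - π / 4 = 3 * θ + π / 2 := by ring
  have h₃ : 2 * (θ + π / 4) = 2 * θ + π / 2 := by ring
  rw [Arot_eq_rotZ, rotZ_mulVec_Xhat, h₁, h₂, h₃, Xhen]
  simp only [sin_add_pi_div_two, cos_add_pi_div_two, neg_cons, neg_empty]
  apply vec3_eq <;> ring
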